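/- arXiv:2504.19359 — 2 statements merged into one kernel-verified Lean document; each statement's English description precedes it below -/
import Mathlib

section
/- Let b and c be real numbers with b² < 4(1+c²), let λ± = (b ± i√(4(1+c²) − b²))/(2(1 − ic)), let G be the 2×2 complex matrix with rows (b/(1 − ic), −(1 + ic)/(1 − ic)) and (1, 0), and let P be the 2×2 matrix with rows (λ₊, λ₋) and (1, 1). Then for every vector y ∈ ℂ², the Euclidean norm satisfies |P⁻¹Gy|₂ = |P⁻¹y|₂. -/
open Complex Matrix

/-!
The columns `(λ, 1)` of `P` are eigenvectors of the companion matrix of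
`X² - (λ₊ + λ₋) X + λ₊ λ₋`, and `G` is exactly that companion matrix, because
`λ₊ + λ₋ = b/(1 - ic)` and `λ₊ λ₋ = (1 + ic)/(1 - ic)`. Hence `P⁻¹ G = diag(λ₊, λ₋) P⁻¹`,
where `P` is invertible since `b² < 4(1 + c²)` forces `λ₊ ≠ λ₋`. Finally `|λ±| = 1`, because
`|b ± i√(4(1+c²) - b²)|² = 4(1 + c²) = |2(1 - ic)|²`.
-/

theorem Matrix.companion_mul_vandermonde {R : Type*} [CommRing R] (l₁ l₂ : R) :
    !![l₁ + l₂, -(l₁ * l₂); 1, 0] * !![l₁, l₂; 1, 1] =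
      !![l₁, l₂; 1, 1] * diagonal ![l₁, l₂] := by
  rw [diagonal_fin_two, mul_fin_two, mul_fin_two]
  simp only [cons_val_zero, cons_val_one]
  ring_nf

theorem Matrix.inv_mulVec_mulVec_of_mul_eq_mul_diagonal {n R : Type*} [Fintype n] [DecidableEq n]
    [CommRing R] {G P : Matrix n n R} {d : n → R} (hP : IsUnit P.det)
    (hGP : G * P = P * diagonal d) (y : n → R) :
    P⁻¹ *ᵥ (G *ᵥ y) = diagonal d *ᵥ (P⁻¹ *ᵥ y) := by
  have hconj : P⁻¹ * G = diagonal d * P⁻¹ := by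
    calc P⁻¹ * G = P⁻¹ * (G * P) * P⁻¹ := by
          rw [Matrix.mul_assoc, Matrix.mul_assoc, mul_nonsing_inv _ hP, Matrix.mul_one]
      _ = diagonal d * P⁻¹ := by
          rw [hGP, ← Matrix.mul_assoc, nonsing_inv_mul _ hP, Matrix.one_mul]
  rw [mulVec_mulVec, hconj, ← mulVec_mulVec]

theorem Complex.one_sub_I_mul_ofReal_ne_zero (c : ℝ) : (1 : ℂ) - I * c ≠ 0 := by
  intro h
  simpa using congrArg Complex.re h

section QuadraticRoots

variable (b c s : ℝ)

theorem norm_quadratic_root_eq_one (hs : b ^ 2 + s ^ 2 = 4 * (1 + c ^ 2)) :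
    ‖(b + I * s) / (2 * (1 - I * c))‖ = 1 := by
  have hnum : normSq ((b : ℂ) + I * s) = b ^ 2 + s ^ 2 := by
    rw [mul_comm, normSq_add_mul_I]
  have hden : normSq (2 * (1 - I * (c : ℂ))) = 4 * (1 + c ^ 2) := by
    have : 2 * (1 - I * (c : ℂ)) = (2 : ℝ) + (-2 * c : ℝ) * I := by push_cast; ring
    rw [this, normSq_add_mul_I]
    ring
  rw [norm_def, normSq_div, hnum, hden, hs, div_self (by positivity), Real.sqrt_one]

theorem quadratic_roots_add :
    (b + I * s) / (2 * (1 - I * c)) + (b - I * s) / (2 * (1 - I * c)) = b / (1 - I * c) := by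
  have := one_sub_I_mul_ofReal_ne_zero c
  field_simp
  ring

theorem quadratic_roots_mul (hs : b ^ 2 + s ^ 2 = 4 * (1 + c ^ 2)) :
    (b + I * s) / (2 * (1 - I * c)) * ((b - I * s) / (2 * (1 - I * c))) =
      (1 + I * c) / (1 - I * c) := by
  have hc := one_sub_I_mul_ofReal_ne_zero c
  have hs' : (b : ℂ) ^ 2 + (s : ℂ) ^ 2 = 4 * (1 + (c : ℂ) ^ 2) := by exact_mod_cast hs
  field_simp
  linear_combination hs' + (4 * c ^ 2 - s ^ 2) * I_sq

theorem quadratic_roots_sub_ne_zero (hs : s ≠ 0) :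
    (b + I * s) / (2 * (1 - I * c)) - (b - I * s) / (2 * (1 - I * c)) ≠ 0 := by
  have hc := one_sub_I_mul_ofReal_ne_zero c
  rw [← sub_div, add_sub_sub_cancel, ← two_mul]
  exact div_ne_zero (mul_ne_zero two_ne_zero (mul_ne_zero I_ne_zero (ofReal_ne_zero.2 hs)))
    (mul_ne_zero two_ne_zero hc)

end QuadraticRoots

/-- Conservation of the transformed Euclidean norm: with b² < 4(1+c²),
λ± = (b ± i√(4(1+c²) − b²))/(2(1 − ic)), G = [[b/(1−ic), −(1+ic)/(1−ic)], [1, 0]]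
and P = [[λ₊, λ₋], [1, 1]], every y ∈ ℂ² satisfies |P⁻¹Gy|₂ = |P⁻¹y|₂. -/
theorem transformed_norm_conservation (b c : ℝ) (h : b ^ 2 < 4 * (1 + c ^ 2))
    (lamp lamm : ℂ)
    (hp : lamp = (b + I * Real.sqrt (4 * (1 + c ^ 2) - b ^ 2)) / (2 * (1 - I * c)))
    (hm : lamm = (b - I * Real.sqrt (4 * (1 + c ^ 2) - b ^ 2)) / (2 * (1 - I * c)))
    (G P : Matrix (Fin 2) (Fin 2) ℂ)
    (hG : G = !![b / (1 - I * c), -(1 + I * c) / (1 - I * c); 1, 0])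
    (hP : P = !![lamp, lamm; 1, 1]) :
    ∀ y : Fin 2 → ℂ,
      Real.sqrt (‖P⁻¹.mulVec (G.mulVec y) 0‖ ^ 2 +
        ‖P⁻¹.mulVec (G.mulVec y) 1‖ ^ 2) =
      Real.sqrt (‖P⁻¹.mulVec y 0‖ ^ 2 +
        ‖P⁻¹.mulVec y 1‖ ^ 2) := by
  intro y
  set s := Real.sqrt (4 * (1 + c ^ 2) - b ^ 2)
  have hs : b ^ 2 + s ^ 2 = 4 * (1 + c ^ 2) := by
    rw [Real.sq_sqrt (by linarith)]; ring
  have hs₀ : s ≠ 0 := (Real.sqrt_pos.2 (by linarith)).ne'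
  have hG' : G = !![lamp + lamm, -(lamp * lamm); 1, 0] := by
    rw [hG, hp, hm, quadratic_roots_add, quadratic_roots_mul b c s hs, neg_div]
  have hdet : IsUnit P.det := by
    simpa [hP, det_fin_two, hp, hm] using quadratic_roots_sub_ne_zero b c s hs₀
  have hlamp : ‖lamp‖ = 1 := hp ▸ norm_quadratic_root_eq_one b c s hs
  have hlamm : ‖lamm‖ = 1 := by
    simpa [hm, sub_eq_add_neg] using norm_quadratic_root_eq_one b c (-s) (by rwa [neg_sq])
  have hGP : G * P = P * diagonal ![lamp, lamm] := hG' ▸ hP ▸ companion_mul_vandermonde lamp lamm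
  rw [inv_mulVec_mulVec_of_mul_eq_mul_diagonal hdet hGP]
  simp [mulVec_diagonal, hlamp, hlamm]
end

section
/- Let 0 ≤ r < 1, and let b and c be real numbers with b² ≤ 4r²(1+c²). With λ± = (b ± i√(4(1+c²) − b²))/(2(1 − ic)) and P the 2×2 complex matrix with rows (λ₊, λ₋) and (1, 1), every vector y ∈ ℂ² satisfies (1/2)|y|₂ ≤ |P⁻¹y|₂ ≤ |y|₂/√(2(1 − r)). -/
open Complex Matrix ComplexConjugate

/-!
The eigenvalues `λ± = (b ± i s) / (2 (1 - i c))`, `s = √(4(1+c²) - b²)`, are unimodular, since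
`b² + s² = 4(1+c²) = |2(1 - i c)|²`, and their sum `b / (1 - i c)` has modulus at most `2r`.
Writing `y = P z`, unimodularity gives
`|y|² = 2|z|² + 2 Re((λ₊ conj λ₋ + 1) z₀ conj z₁)` with `λ₊ conj λ₋ + 1 = conj λ₋ (λ₊ + λ₋)`,
so `||y|² - 2|z|²| ≤ 2r |z|²`, i.e. `2(1 - r)|z|² ≤ |y|² ≤ 4|z|²`.
-/

lemma abs_norm_sq_add_norm_sq_sub_le {a b : ℂ} (ha : ‖a‖ = 1) (hb : ‖b‖ = 1) (u v : ℂ) :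
    |‖a * u + b * v‖ ^ 2 + ‖u + v‖ ^ 2 - 2 * (‖u‖ ^ 2 + ‖v‖ ^ 2)|
      ≤ ‖a + b‖ * (‖u‖ ^ 2 + ‖v‖ ^ 2) := by
  have hbb : b * conj b = 1 := by rw [mul_conj, ← Complex.sq_norm, hb]; norm_num
  have hexpand : ‖a * u + b * v‖ ^ 2 + ‖u + v‖ ^ 2 - 2 * (‖u‖ ^ 2 + ‖v‖ ^ 2)
      = 2 * ((a * conj b + 1) * (u * conj v)).re := by
    simp only [Complex.sq_norm, normSq_add, map_mul]
    rw [← Complex.sq_norm a, ← Complex.sq_norm b, ha, hb]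
    simp only [add_mul, one_mul, add_re]
    ring_nf
  have hfactor : a * conj b + 1 = conj b * (a + b) := by linear_combination -hbb
  rw [hexpand, hfactor, abs_mul, abs_two]
  calc 2 * |(conj b * (a + b) * (u * conj v)).re|
      ≤ 2 * (‖a + b‖ * (‖u‖ * ‖v‖)) := by
        gcongr
        refine (abs_re_le_norm _).trans_eq ?_
        simp [hb]
    _ ≤ ‖a + b‖ * (‖u‖ ^ 2 + ‖v‖ ^ 2) := by
        nlinarith [two_mul_le_add_sq ‖u‖ ‖v‖, norm_nonneg (a + b)]

lemma normSq_two_mul_one_sub_I_mul (c : ℝ) : normSq (2 * (1 - I * c)) = 4 * (1 + c ^ 2) := by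
  simp [normSq_apply]
  ring

lemma norm_div_two_mul_one_sub_I_mul_eq_one {b s c : ℝ} (h : b ^ 2 + s ^ 2 = 4 * (1 + c ^ 2)) :
    ‖(b + I * s) / (2 * (1 - I * c))‖ = 1 := by
  have hnum : normSq (b + I * s) = b ^ 2 + s ^ 2 := by
    simp [normSq_apply]
    ring
  rw [norm_def, Real.sqrt_eq_one, normSq_div, hnum, normSq_two_mul_one_sub_I_mul, h,
    div_self (by positivity)]

lemma norm_ofReal_div_one_sub_I_mul_le {r b c : ℝ} (hr : 0 ≤ r)
    (h : b ^ 2 ≤ 4 * r ^ 2 * (1 + c ^ 2)) : ‖(b : ℂ) / (1 - I * c)‖ ≤ 2 * r := by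
  have hden : normSq (1 - I * c) = 1 + c ^ 2 := by
    simp [normSq_apply]
    ring
  rw [norm_def, Real.sqrt_le_left (by positivity), normSq_div, hden, normSq_ofReal,
    div_le_iff₀ (by positivity)]
  linarith

lemma add_I_mul_div_ne_sub_I_mul_div {b s : ℝ} {w : ℂ} (hs : s ≠ 0) (hw : w ≠ 0) :
    (b + I * s) / w ≠ (b - I * s) / w := by
  rw [Ne, div_left_inj' hw]
  intro heq
  have him := congrArg im heq
  simp only [add_im, sub_im, ofReal_im, mul_im, I_re, I_im, ofReal_re] at him
  exact hs (by linarith)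

lemma isUnit_det_of_ne {K : Type*} [Field K] {a b : K} (hab : a ≠ b) :
    IsUnit !![a, b; 1, 1].det := by
  rw [det_fin_two_of, isUnit_iff_ne_zero, mul_one, mul_one]
  exact sub_ne_zero.mpr hab

lemma sqrt_bounds_of_abs_sub_two_mul_le {M N r : ℝ} (hN : 0 ≤ N) (hr : r < 1)
    (h : |M - 2 * N| ≤ 2 * r * N) :
    (1 / 2) * √M ≤ √N ∧ √N ≤ √M / √(2 * (1 - r)) := by
  obtain ⟨hlow, hup⟩ := abs_le.mp h
  constructor
  · have hM : √M ≤ √(2 ^ 2 * N) := Real.sqrt_le_sqrt (by nlinarith)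
    rw [Real.sqrt_mul (by norm_num), Real.sqrt_sq (by norm_num)] at hM
    linarith
  · rw [le_div_iff₀ (Real.sqrt_pos.mpr (by linarith)), ← Real.sqrt_mul hN]
    exact Real.sqrt_le_sqrt (by linarith)

/-- Norm equivalence for the transformed norm: under the stability condition
b² ≤ 4r²(1+c²) with 0 ≤ r < 1, with λ± = (b ± i√(4(1+c²) − b²))/(2(1 − ic)) and
P = [[λ₊, λ₋], [1, 1]], every y ∈ ℂ² satisfies
(1/2)|y|₂ ≤ |P⁻¹y|₂ ≤ |y|₂/√(2(1 − r)) in the Euclidean norm. -/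
theorem transformed_norm_equivalence (r b c : ℝ) (hr0 : 0 ≤ r) (hr1 : r < 1)
    (h : b ^ 2 ≤ 4 * r ^ 2 * (1 + c ^ 2))
    (lamp lamm : ℂ)
    (hp : lamp = (b + I * Real.sqrt (4 * (1 + c ^ 2) - b ^ 2)) / (2 * (1 - I * c)))
    (hm : lamm = (b - I * Real.sqrt (4 * (1 + c ^ 2) - b ^ 2)) / (2 * (1 - I * c)))
    (P : Matrix (Fin 2) (Fin 2) ℂ)
    (hP : P = !![lamp, lamm; 1, 1]) :
    ∀ y : Fin 2 → ℂ,
      (1 / 2) * Real.sqrt (‖y 0‖ ^ 2 + ‖y 1‖ ^ 2) ≤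
        Real.sqrt (‖P⁻¹.mulVec y 0‖ ^ 2 + ‖P⁻¹.mulVec y 1‖ ^ 2) ∧
      Real.sqrt (‖P⁻¹.mulVec y 0‖ ^ 2 + ‖P⁻¹.mulVec y 1‖ ^ 2) ≤
        Real.sqrt (‖y 0‖ ^ 2 + ‖y 1‖ ^ 2) / Real.sqrt (2 * (1 - r)) := by
  intro y
  set s := √(4 * (1 + c ^ 2) - b ^ 2)
  have hdisc : 0 < 4 * (1 + c ^ 2) - b ^ 2 := by
    nlinarith [mul_pos (by positivity : (0 : ℝ) < 1 + c ^ 2) (by nlinarith : 0 < 1 - r ^ 2)]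
  have hs : b ^ 2 + s ^ 2 = 4 * (1 + c ^ 2) := by rw [Real.sq_sqrt hdisc.le]; ring
  have hlamp : ‖lamp‖ = 1 := hp ▸ norm_div_two_mul_one_sub_I_mul_eq_one hs
  have hlamm : ‖lamm‖ = 1 := by
    rw [hm, sub_eq_add_neg, ← mul_neg, ← ofReal_neg]
    exact norm_div_two_mul_one_sub_I_mul_eq_one (by rwa [neg_sq])
  have hne : (1 : ℂ) - I * c ≠ 0 := fun h0 => by simpa using congrArg re h0
  have hsum : ‖lamp + lamm‖ ≤ 2 * r := by
    rw [hp, hm, ← add_div, show (b : ℂ) + I * s + (b - I * s) = 2 * b by ring,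
      mul_div_mul_left _ _ two_ne_zero]
    exact norm_ofReal_div_one_sub_I_mul_le hr0 h
  have hdet : IsUnit P.det := hP ▸ isUnit_det_of_ne (hp ▸ hm ▸
    add_I_mul_div_ne_sub_I_mul_div (Real.sqrt_pos.mpr hdisc).ne' (mul_ne_zero two_ne_zero hne))
  set z := P⁻¹ *ᵥ y
  have hPz : P *ᵥ z = y := by rw [mulVec_mulVec, mul_nonsing_inv P hdet, one_mulVec]
  have hy0 : y 0 = lamp * z 0 + lamm * z 1 := by simp [← hPz, hP, vecHead, vecTail]
  have hy1 : y 1 = z 0 + z 1 := by simp [← hPz, hP, vecHead, vecTail]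
  refine sqrt_bounds_of_abs_sub_two_mul_le (by positivity) hr1 ?_
  rw [hy0, hy1]
  exact (abs_norm_sq_add_norm_sq_sub_le hlamp hlamm (z 0) (z 1)).trans (by gcongr)
end
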